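/- arXiv:1204.6017 — 3 statements merged into one kernel-verified Lean document; each statement's English description precedes it below -/
import Mathlib

section
/- Let κ ≥ 1 be an integer and let γ₁, …, γ_κ ∈ ℝ∖{0} be such that |γ₁| ≠ |γ_j| for every j = 2, …, κ. Define φ : ℝ → ℂ^κ by φ(t) = (e^{itγ₁}, …, e^{itγ_κ}) and let ν = ∏_{k=2}^∞ cos(π/(2k)). Then for every τ₀ ∈ ℝ, the closure of the convex hull of φ([τ₀, ∞)) contains the set {(νξ, 0, …, 0) : ξ ∈ ℂ, |ξ| = 1}. -/
/-!
Write `C_τ` for the closure of the convex hull of `φ([τ, ∞))`. Since `φ(s) φ(t) = φ(s + t)`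
coordinatewise, `C_0` is a multiplicative monoid and `φ(t) C_0 ⊆ C_τ` for `t ≥ τ`. It contains
the midpoints `(1 + φ(s)) / 2`, `s ≥ 0`, whose `j`-th coordinate has modulus `|cos (s γ_j / 2)|`.

For `p = 2π / |γ₁|` the powers of `(1 + φ(p)) / 2` converge to the indicator of the coordinates
`j` with `γ_j ∈ γ₁ ℤ`. For such a `j ≠ 1` we have `γ_j = n γ₁` with `|n| ≥ 2`, and the midpoint
with `e^{i s γ₁} = e^{iπ/|n|}` vanishes at `j`. Multiplying, for `k = 2, …, K`, midpoints with
`e^{i s γ₁} = e^{iπ/k}` by that limit gives `(w_K, 0, …, 0) ∈ C_0` with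
`|w_K| = ∏_{k=2}^K cos (π/(2k))`; a factor `φ(t)` adjusts the phase, and `K → ∞` gives `ν`.
-/

open Filter Set Topology Pointwise

section ConvexHullMul

variable {E : Type*} [Semiring E] [Algebra ℝ E]

theorem mul_mem_convexHull_mul {s t : Set E} {x y : E} (hx : x ∈ convexHull ℝ s)
    (hy : y ∈ convexHull ℝ t) : x * y ∈ convexHull ℝ (s * t) := by
  have hleft : ∀ a ∈ s, a * y ∈ convexHull ℝ (s * t) := fun a ha =>
    convexHull_min (t := (a * ·) ⁻¹' convexHull ℝ (s * t))
      (fun b hb => subset_convexHull ℝ _ (mul_mem_mul ha hb))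
      ((convex_convexHull ℝ _).linear_preimage (LinearMap.mulLeft ℝ a)) hy
  exact convexHull_min (t := (· * y) ⁻¹' convexHull ℝ (s * t)) hleft
    ((convex_convexHull ℝ _).linear_preimage (LinearMap.mulRight ℝ y)) hx

variable [TopologicalSpace E] [ContinuousMul E]

theorem mul_mem_closure_convexHull_mul {s t : Set E} {x y : E}
    (hx : x ∈ closure (convexHull ℝ s)) (hy : y ∈ closure (convexHull ℝ t)) :
    x * y ∈ closure (convexHull ℝ (s * t)) :=
  map_mem_closure₂ continuous_mul hx hy fun _ ha _ hb => mul_mem_convexHull_mul ha hb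

def Submonoid.closureConvexHull (S : Submonoid E) : Submonoid E where
  carrier := _root_.closure (convexHull ℝ S)
  one_mem' := _root_.subset_closure (subset_convexHull ℝ _ S.one_mem)
  mul_mem' hx hy := _root_.closure_mono (convexHull_mono (mul_subset_iff.2 fun _ ha _ hb =>
    S.mul_mem ha hb)) (mul_mem_closure_convexHull_mul hx hy)

theorem Submonoid.coe_closureConvexHull (S : Submonoid E) :
    (S.closureConvexHull : Set E) = _root_.closure (convexHull ℝ S) := rfl

theorem Submonoid.half_smul_add_mem_closureConvexHull {S : Submonoid E} {x y : E}
    (hx : x ∈ S) (hy : y ∈ S) : (1 / 2 : ℝ) • (x + y) ∈ S.closureConvexHull := by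
  rw [← SetLike.mem_coe, coe_closureConvexHull, smul_add]
  exact _root_.subset_closure (convex_convexHull ℝ _ (subset_convexHull ℝ _ hx)
    (subset_convexHull ℝ _ hy) one_half_pos.le one_half_pos.le (add_halves 1))

end ConvexHullMul

namespace Complex

theorem tendsto_half_smul_one_add_pow {u : ℂ} (hu : ‖u‖ = 1) :
    Tendsto (fun n : ℕ => ((1 / 2 : ℝ) • (1 + u)) ^ n) atTop (𝓝 (if u = 1 then 1 else 0)) := by
  split_ifs with h
  · subst h
    norm_num
  · apply tendsto_pow_atTop_nhds_zero_of_norm_lt_one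
    simpa using (norm_midpoint_lt_iff (x := (1 : ℂ)) (by simp [hu])).2 (Ne.symm h)

theorem norm_half_smul_one_add_exp (θ : ℝ) :
    ‖(1 / 2 : ℝ) • (1 + exp (θ * I))‖ = |Real.cos (θ / 2)| := by
  have h : 1 + exp (θ * I) = exp (↑(θ / 2) * I) * (2 * ↑(Real.cos (θ / 2))) := by
    rw [ofReal_cos, cos, mul_div_cancel₀ _ two_ne_zero, mul_add, ← exp_add, ← exp_add]
    push_cast
    ring_nf
    rw [exp_zero, add_comm]
  rw [h, norm_smul, norm_mul, norm_exp_ofReal_mul_I, norm_mul, norm_real]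
  simp

theorem exp_I_mul_two_pi_div_abs_mul {a : ℝ} (ha : a ≠ 0) :
    exp (I * ↑(2 * Real.pi / |a|) * a) = 1 := by
  have ha' : (a : ℂ) ≠ 0 := ofReal_ne_zero.2 ha
  rcases abs_cases a with ⟨h, -⟩ | ⟨h, -⟩ <;> rw [h] <;> refine exp_eq_one_iff.2 ?_
  · exact ⟨1, by push_cast; field_simp⟩
  · exact ⟨-1, by push_cast; field_simp⟩

theorem exists_exp_I_mul_eq {a : ℝ} (ha : a ≠ 0) (τ : ℝ) {c : ℂ} (hc : ‖c‖ = 1) :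
    ∃ t : ℝ, τ ≤ t ∧ exp (I * t * a) = c := by
  have hper : Function.Periodic (fun t : ℝ => exp (I * t * a)) (2 * Real.pi / |a|) := fun t => by
    simp only [ofReal_add, mul_add, add_mul, exp_add, exp_I_mul_two_pi_div_abs_mul ha, mul_one]
  obtain ⟨t, ht, heq⟩ := hper.exists_mem_Ico (by positivity) (c.arg / a) τ
  refine ⟨t, ht.1, heq ▸ ?_⟩
  have ha' : (a : ℂ) ≠ 0 := ofReal_ne_zero.2 ha
  have : I * ↑(c.arg / a) * ↑a = c.arg * I := by
    push_cast
    field_simp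
  rw [this]
  simpa [hc] using norm_mul_exp_arg_mul_I c

theorem exists_int_eq_mul_of_exp_eq_one {a b : ℝ} (ha : a ≠ 0)
    (h : exp (I * ↑(2 * Real.pi / |a|) * b) = 1) : ∃ n : ℤ, b = n * a := by
  obtain ⟨n, hn⟩ := exp_eq_one_iff.1 h
  have hb : b = n * |a| := by
    have him : 2 * Real.pi / |a| * b = n * (2 * Real.pi) := by simpa using congrArg im hn
    field_simp at him
    linarith
  rcases abs_cases a with ⟨h, -⟩ | ⟨h, -⟩
  · exact ⟨n, by rw [hb, h]⟩
  · exact ⟨-n, by rw [hb, h]; push_cast; ring⟩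

theorem one_add_exp_I_mul_eq_zero {a b s : ℝ} {n : ℤ} (hn : n ≠ 0) (hb : b = n * a)
    (hs : exp (I * s * a) = exp (↑(Real.pi / n.natAbs) * I)) : 1 + exp (I * s * b) = 0 := by
  have hzpow : exp (I * s * b) = exp (↑(Real.pi / n.natAbs) * I) ^ n := by
    rw [← hs, ← exp_int_mul, hb]
    push_cast
    ring_nf
  rw [hzpow]
  obtain ⟨k, rfl | rfl⟩ := Int.eq_nat_or_neg n <;>
  · have hk : (k : ℂ) ≠ 0 := by exact_mod_cast fun h => hn (by simp [h])
    simp only [Int.natAbs_neg, Int.natAbs_natCast, zpow_neg, zpow_natCast, ← exp_nat_mul]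
    rw [show (k : ℂ) * (↑(Real.pi / k) * I) = Real.pi * I by push_cast; field_simp, exp_pi_mul_I]
    norm_num

theorem norm_prod_half_smul_one_add_exp (K : ℕ) :
    ‖∏ k ∈ Finset.Icc 2 K, (1 / 2 : ℝ) • (1 + exp (↑(Real.pi / k) * I))‖ =
      ∏ k ∈ Finset.Icc 2 K, Real.cos (Real.pi / (2 * k)) := by
  rw [norm_prod]
  refine Finset.prod_congr rfl fun k hk => ?_
  have hk : (1 : ℝ) ≤ k := Nat.one_le_cast.2 (by have := (Finset.mem_Icc.1 hk).1; omega)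
  rw [norm_half_smul_one_add_exp, div_div, mul_comm (k : ℝ)]
  refine abs_of_nonneg (Real.cos_nonneg_of_neg_pi_div_two_le_of_le ?_ ?_)
  · have : 0 ≤ Real.pi / (2 * k) := by positivity
    linarith [Real.pi_pos]
  · exact div_le_div_of_nonneg_left Real.pi_pos.le two_pos (by linarith)

end Complex

section ExpCurve

variable {ι : Type*} (γ : ι → ℝ)

noncomputable def expCurve (t : ℝ) : ι → ℂ := fun j => Complex.exp (Complex.I * t * γ j)

theorem expCurve_add (s t : ℝ) : expCurve γ (s + t) = expCurve γ s * expCurve γ t := by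
  ext j
  simp only [expCurve, Pi.mul_apply, ← Complex.exp_add]
  push_cast
  ring_nf

theorem expCurve_zero : expCurve γ 0 = 1 := by
  ext j
  simp [expCurve]

theorem norm_expCurve_apply (t : ℝ) (j : ι) : ‖expCurve γ t j‖ = 1 := by
  simp [expCurve, Complex.norm_exp]

def expCurveOrbit : Submonoid (ι → ℂ) where
  carrier := expCurve γ '' Ici 0
  one_mem' := ⟨0, mem_Ici.2 le_rfl, expCurve_zero γ⟩
  mul_mem' := by
    rintro _ _ ⟨s, hs : 0 ≤ s, rfl⟩ ⟨t, ht : 0 ≤ t, rfl⟩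
    exact ⟨s + t, add_nonneg hs ht, expCurve_add γ s t⟩

theorem expCurve_mem_expCurveOrbit {t : ℝ} (ht : 0 ≤ t) : expCurve γ t ∈ expCurveOrbit γ :=
  ⟨t, ht, rfl⟩

theorem expCurve_mul_mem_closure_convexHull {τ t : ℝ} (ht : τ ≤ t) {m : ι → ℂ}
    (hm : m ∈ (expCurveOrbit γ).closureConvexHull) :
    expCurve γ t * m ∈ closure (convexHull ℝ (expCurve γ '' Ici τ)) := by
  refine closure_mono (convexHull_mono ?_) (mul_mem_closure_convexHull_mul
    (subset_closure (subset_convexHull ℝ _ (mem_singleton _))) hm)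
  rintro _ ⟨_, rfl, _, ⟨s, hs, rfl⟩, rfl⟩
  exact ⟨t + s, by simp only [mem_Ici] at hs ⊢; linarith, expCurve_add γ t s⟩

theorem ite_expCurve_eq_one_mem_closureConvexHull {p : ℝ} (hp : 0 ≤ p) :
    (fun j => if expCurve γ p j = 1 then 1 else 0) ∈ (expCurveOrbit γ).closureConvexHull := by
  have hpow (n : ℕ) : ((1 / 2 : ℝ) • (1 + expCurve γ p)) ^ n ∈
      (expCurveOrbit γ).closureConvexHull :=
    pow_mem (Submonoid.half_smul_add_mem_closureConvexHull (one_mem _)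
      (expCurve_mem_expCurveOrbit γ hp)) n
  refine isClosed_closure.mem_of_tendsto (tendsto_pi_nhds.2 fun j => ?_)
    (Eventually.of_forall (f := atTop) hpow)
  simpa using Complex.tendsto_half_smul_one_add_pow (norm_expCurve_apply γ p j)

end ExpCurve

section SingleCoordinate

variable {ι : Type*} {γ : ι → ℝ} {i₀ : ι} [DecidableEq ι]

theorem single_mul_norm_mem_closure_convexHull (hγ₀ : γ i₀ ≠ 0) (τ : ℝ) {w ζ : ℂ}
    (hw : Pi.single i₀ w ∈ (expCurveOrbit γ).closureConvexHull) (hζ : ‖ζ‖ = 1) :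
    Pi.single i₀ (ζ * ‖w‖) ∈ closure (convexHull ℝ (expCurve γ '' Ici τ)) := by
  obtain ⟨c, hc, hcw⟩ : ∃ c : ℂ, ‖c‖ = 1 ∧ c * w = ζ * ‖w‖ := by
    rcases eq_or_ne w 0 with rfl | hw0
    · exact ⟨1, by simp, by simp⟩
    · exact ⟨ζ * ‖w‖ / w, by simp [hζ, hw0], div_mul_cancel₀ _ hw0⟩
  obtain ⟨t, ht, htc⟩ := Complex.exists_exp_I_mul_eq hγ₀ τ hc
  have := expCurve_mul_mem_closure_convexHull γ ht hw
  rwa [← Pi.single_mul_right, expCurve, htc, hcw] at this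

open Real Complex in
theorem eventually_single_prod_mem_closureConvexHull [Finite ι] (hγ : ∀ j, γ j ≠ 0)
    (habs : ∀ j ≠ i₀, |γ i₀| ≠ |γ j|) :
    ∀ᶠ K : ℕ in atTop,
      Pi.single i₀ (∏ k ∈ Finset.Icc 2 K, (1 / 2 : ℝ) • (1 + exp (↑(π / k) * I))) ∈
        (expCurveOrbit γ).closureConvexHull := by
  choose s hs0 hs using fun k : ℕ =>
    exists_exp_I_mul_eq (hγ i₀) 0 (c := exp (↑(π / k) * I)) (norm_exp_ofReal_mul_I _)
  set p := 2 * π / |γ i₀|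
  have hkill (j : ι) : ∀ᶠ K : ℕ in atTop, j ≠ i₀ → expCurve γ p j = 1 →
      ∃ k ∈ Finset.Icc 2 K, 1 + expCurve γ (s k) j = 0 := by
    by_cases hj : j ≠ i₀ ∧ expCurve γ p j = 1
    · obtain ⟨n, hn⟩ := exists_int_eq_mul_of_exp_eq_one (hγ i₀) hj.2
      have hn0 : n.natAbs ≠ 0 := fun h => hγ j (by simp_all)
      have hn1 : n.natAbs ≠ 1 := fun h => habs j hj.1 (by
        rw [hn, abs_mul, ← Int.cast_abs, Int.abs_eq_natAbs, h]; simp)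
      filter_upwards [eventually_ge_atTop n.natAbs] with K hK _ _
      exact ⟨n.natAbs, Finset.mem_Icc.2 ⟨by omega, hK⟩,
        one_add_exp_I_mul_eq_zero (by omega) hn (hs _)⟩
    · exact .of_forall fun K h1 h2 => absurd ⟨h1, h2⟩ hj
  filter_upwards [eventually_all.2 hkill] with K hK
  have hprod : ∏ k ∈ Finset.Icc 2 K, (1 / 2 : ℝ) • (1 + expCurve γ (s k)) ∈
      (expCurveOrbit γ).closureConvexHull := prod_mem fun k _ =>
    Submonoid.half_smul_add_mem_closureConvexHull (one_mem _)
      (expCurve_mem_expCurveOrbit γ (hs0 k))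
  convert mul_mem hprod
    (ite_expCurve_eq_one_mem_closureConvexHull γ (p := p) (by positivity)) using 1
  ext j
  rw [Pi.mul_apply, Finset.prod_apply]
  by_cases hj : j = i₀
  · subst hj
    have hp : expCurve γ p j = 1 := exp_I_mul_two_pi_div_abs_mul (hγ j)
    simp only [Pi.single_eq_same, hp, if_true, mul_one]
    simp [expCurve, hs]
  · by_cases hpj : expCurve γ p j = 1
    · obtain ⟨k, hk, h0⟩ := hK j hj hpj
      rw [Pi.single_eq_of_ne hj, Finset.prod_eq_zero hk (by simp [h0])]
      simp
    · simp [hj, hpj]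

end SingleCoordinate

/-- Convexification lemma (closure part): let `γ₁, …, γ_κ` be nonzero real numbers with
`|γ₁| ≠ |γ_j|` for `j ≥ 2`, let `φ(t) = (e^{itγ₁}, …, e^{itγ_κ}) ∈ ℂ^κ` and let
`ν = ∏_{k=2}^∞ cos(π/(2k))`.  Then for every `τ₀ ∈ ℝ` the closure of the convex hull of
`φ([τ₀, ∞))` contains every point `(νξ, 0, …, 0)` with `ξ ∈ ℂ`, `|ξ| = 1`. -/
theorem convexification_closure
    (κ : ℕ) (hκ : 1 ≤ κ) (γ : Fin κ → ℝ)
    (hγ : ∀ j, γ j ≠ 0)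
    (hγ1 : ∀ j : Fin κ, j ≠ ⟨0, hκ⟩ → |γ ⟨0, hκ⟩| ≠ |γ j|)
    (ν : ℝ)
    (hν : Tendsto (fun n : ℕ => ∏ k ∈ Finset.Icc 2 n, Real.cos (Real.pi / (2 * k)))
      atTop (nhds ν))
    (τ₀ : ℝ) :
    {x : Fin κ → ℂ | ∃ ξ : ℂ, ‖ξ‖ = 1 ∧
        x = fun j => if j = ⟨0, hκ⟩ then (ν : ℂ) * ξ else 0} ⊆
      closure (convexHull ℝ
        ((fun t : ℝ => fun j : Fin κ => Complex.exp (Complex.I * t * (γ j : ℂ))) ''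
          Set.Ici τ₀)) := by
  rintro _ ⟨ξ, hξ, rfl⟩
  have hmem : ∀ᶠ K : ℕ in atTop, Pi.single ⟨0, hκ⟩
      (ξ * ↑(∏ k ∈ Finset.Icc 2 K, Real.cos (Real.pi / (2 * k)))) ∈
      closure (convexHull ℝ (expCurve γ '' Ici τ₀)) := by
    filter_upwards [eventually_single_prod_mem_closureConvexHull hγ hγ1] with K hK
    have := single_mul_norm_mem_closure_convexHull (hγ _) τ₀ hK hξ
    rwa [Complex.norm_prod_half_smul_one_add_exp] at this
  have hlim := ((continuous_single (A := fun _ : Fin κ => ℂ) ⟨0, hκ⟩).tendsto _).comp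
    (hν.ofReal.const_mul ξ)
  have htarget : (fun j => if j = ⟨0, hκ⟩ then (ν : ℂ) * ξ else 0) =
      Pi.single (⟨0, hκ⟩ : Fin κ) (ξ * ν) := by
    ext j
    rw [Pi.single_apply, mul_comm]
  rw [htarget]
  exact isClosed_closure.mem_of_tendsto hlim hmem
end

section
/- The real Lie algebra L generated by A, B₁, B₂, B₃ contains the elementary matrices E_{(ℓ,k),(ℓ+1,k+j)} for every k = −ℓ, …, ℓ and every j ∈ {−1, 0, 1}. -/
open Matrix

attribute [local instance] LieRing.ofAssociativeRing

/-- The index set `J_ℓ = {(j,k) : j ∈ {ℓ, ℓ+1}, -j ≤ k ≤ j}`. -/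
noncomputable def Jset (l : ℕ) : Finset (ℤ × ℤ) :=
  (({(l : ℤ), (l : ℤ) + 1} : Finset ℤ) ×ˢ Finset.Icc (-((l : ℤ) + 1)) ((l : ℤ) + 1)).filter
    fun x => -x.1 ≤ x.2 ∧ x.2 ≤ x.1

/-- The space of complex matrices indexed by `J_ℓ`. -/
abbrev Mat (l : ℕ) := Matrix (Jset l) (Jset l) ℂ

/-- `e_{a,b}`: matrix with a single entry `1` at position `(a,b)`. -/
def eM (l : ℕ) (a b : ℤ × ℤ) : Mat l :=
  fun x y => if (x : ℤ × ℤ) = a ∧ (y : ℤ × ℤ) = b then 1 else 0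

/-- `E_{a,b} = e_{a,b} - e_{b,a}`. -/
def Em (l : ℕ) (a b : ℤ × ℤ) : Mat l := eM l a b - eM l b a

/-- `F_{a,b} = i e_{a,b} + i e_{b,a}`. -/
def Fm (l : ℕ) (a b : ℤ × ℤ) : Mat l := Complex.I • eM l a b + Complex.I • eM l b a

/-- `D_{a,b} = i e_{a,a} - i e_{b,b}`. -/
def Dm (l : ℕ) (a b : ℤ × ℤ) : Mat l := Complex.I • eM l a a - Complex.I • eM l b b

/-- `p_{ℓ,m} = -√(((ℓ+1)² - m²)/((2ℓ+1)(2ℓ+3)))`. -/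
noncomputable def pc (l : ℕ) (m : ℤ) : ℝ :=
  -Real.sqrt ((((l : ℝ) + 1) ^ 2 - (m : ℝ) ^ 2) / ((2 * (l : ℝ) + 1) * (2 * (l : ℝ) + 3)))

/-- `q_{ℓ,m} = √(((ℓ-m+2)(ℓ-m+1))/(4(2ℓ+1)(2ℓ+3)))`. -/
noncomputable def qc (l : ℕ) (m : ℤ) : ℝ :=
  Real.sqrt (((l : ℝ) - (m : ℝ) + 2) * ((l : ℝ) - (m : ℝ) + 1) /
    (4 * (2 * (l : ℝ) + 1) * (2 * (l : ℝ) + 3)))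

/-- The control potential `B₁`. -/
noncomputable def B1 (l : ℕ) : Mat l :=
  ∑ m ∈ Finset.Icc (-(l : ℤ)) (l : ℤ),
    ((-qc l m) • Fm l ((l : ℤ), m) ((l : ℤ) + 1, m - 1)
      + qc l (-m) • Fm l ((l : ℤ), m) ((l : ℤ) + 1, m + 1))

/-- The control potential `B₂`. -/
noncomputable def B2 (l : ℕ) : Mat l :=
  ∑ m ∈ Finset.Icc (-(l : ℤ)) (l : ℤ),
    (qc l m • Em l ((l : ℤ), m) ((l : ℤ) + 1, m - 1)
      + qc l (-m) • Em l ((l : ℤ), m) ((l : ℤ) + 1, m + 1))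

/-- The control potential `B₃`. -/
noncomputable def B3 (l : ℕ) : Mat l :=
  ∑ m ∈ Finset.Icc (-(l : ℤ)) (l : ℤ), pc l m • Fm l ((l : ℤ), m) ((l : ℤ) + 1, m)

/-- The (traceless) drift matrix `A`. -/
noncomputable def Am (l : ℕ) : Mat l :=
  (∑ k ∈ Finset.Icc (-(l : ℤ)) (l : ℤ),
      (Complex.I * (2 * (l : ℂ) + 3) / 2) • eM l ((l : ℤ), k) ((l : ℤ), k))
    + ∑ k ∈ Finset.Icc (-((l : ℤ) + 1)) ((l : ℤ) + 1),
      (-(Complex.I * (2 * (l : ℂ) + 1) / 2)) • eM l ((l : ℤ) + 1, k) ((l : ℤ) + 1, k)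

/-!
Conjugation by the diagonal drift rotates `E_{a,b}` into `F_{a,b}`: for `a = (ℓ,m)` and
`b = (ℓ+1,n)` one has `[A, E_{a,b}] = (2ℓ+2) F_{a,b}` and `[A, F_{a,b}] = -(2ℓ+2) E_{a,b}`.
Hence together with `B₁, B₂, B₃` the algebra contains their `E`- and `F`-versions, and `B₁, B₂`
combine to the two bands `Σ_m q_{ℓ,-m} E_{(ℓ,m),(ℓ+1,m+1)}` and `Σ_m q_{ℓ,m} E_{(ℓ,m),(ℓ+1,m-1)}`.

Distinct terms of a band share no index, so the commutator of its `E`- and `F`-versions is a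
diagonal matrix `D = diag(i g)`. Now `ad_D²` multiplies `E_{a,b}` by `-(g(a) - g(b))²`; these
eigenvalues are pairwise distinct along the band (`q_{ℓ,m}²` is strictly monotone in `m`), so
the band splits inside the Lie algebra into its individual terms. The terms of `B₃` are
separated in the same way by the diagonal matrix coming from the band `j = 1`.
-/

open Finset

theorem Submodule.mem_of_sum_mem_of_eigenvectors {𝕜 V ι : Type*} [Field 𝕜] [AddCommGroup V]
    [Module 𝕜 V] {p : Submodule 𝕜 V} {f : Module.End 𝕜 V} (hf : ∀ x ∈ p, f x ∈ p)
    {s : Finset ι} {v : ι → V} {μ : ι → 𝕜} (hμ : Set.InjOn μ s)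
    (hv : ∀ i ∈ s, f (v i) = μ i • v i) (hs : ∑ i ∈ s, v i ∈ p) : ∀ i ∈ s, v i ∈ p := by
  classical
  induction s using Finset.induction_on generalizing v with
  | empty => simp
  | insert a s ha ih =>
    rw [sum_insert ha] at hs
    have hshift : ∑ i ∈ s, (μ i - μ a) • v i ∈ p := by
      have hfa : f (v a + ∑ i ∈ s, v i) - μ a • (v a + ∑ i ∈ s, v i) =
          ∑ i ∈ s, (μ i - μ a) • v i := by
        simp only [map_add, map_sum, hv a (mem_insert_self a s),
          sum_congr rfl fun i hi => hv i (mem_insert_of_mem hi), smul_add, smul_sum,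
          sub_smul, sum_sub_distrib]
        abel
      exact hfa ▸ p.sub_mem (hf _ hs) (p.smul_mem _ hs)
    have hmem : ∀ i ∈ s, v i ∈ p := by
      intro i hi
      have hne : μ i - μ a ≠ 0 := sub_ne_zero.mpr fun h =>
        ha (hμ (by simp [hi]) (by simp) h ▸ hi)
      refine (p.smul_mem_iff hne).mp (ih (hμ.mono (by simp)) (fun i hi => ?_) hshift i hi)
      rw [map_smul, hv i (mem_insert_of_mem hi), smul_comm]
    intro i hi
    rcases mem_insert.mp hi with rfl | hi
    · simpa using p.sub_mem hs (p.sum_mem hmem)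
    · exact hmem i hi

theorem LieSubalgebra.smul_mem_iff {R L : Type*} [Field R] [LieRing L] [LieAlgebra R L]
    (H : LieSubalgebra R L) {c : R} (hc : c ≠ 0) {x : L} : c • x ∈ H ↔ x ∈ H :=
  H.toSubmodule.smul_mem_iff hc

theorem LieSubalgebra.mem_of_sum_mem_of_lie_lie_eq_smul {R L ι : Type*} [Field R] [LieRing L]
    [LieAlgebra R L] (H : LieSubalgebra R L) {D : L} (hD : D ∈ H)
    {s : Finset ι} {v : ι → L} {μ : ι → R} (hμ : Set.InjOn μ s)
    (hv : ∀ i ∈ s, ⁅D, ⁅D, v i⁆⁆ = μ i • v i) (hs : ∑ i ∈ s, v i ∈ H) : ∀ i ∈ s, v i ∈ H :=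
  Submodule.mem_of_sum_mem_of_eigenvectors (p := H.toSubmodule)
    (f := LieAlgebra.ad R L D * LieAlgebra.ad R L D)
    (fun _ hx => H.lie_mem hD (H.lie_mem hD hx)) hμ hv hs

variable {l : ℕ}

theorem mem_Jset {x : ℤ × ℤ} :
    x ∈ Jset l ↔ (x.1 = l ∨ x.1 = l + 1) ∧ -x.1 ≤ x.2 ∧ x.2 ≤ x.1 := by
  rw [Jset, mem_filter, mem_product, mem_insert, mem_singleton, mem_Icc]
  omega

theorem lower_mem_Jset {m : ℤ} (hm : m ∈ Icc (-(l : ℤ)) l) : ((l : ℤ), m) ∈ Jset l := by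
  rw [mem_Icc] at hm
  rw [mem_Jset]
  omega

theorem upper_mem_Jset {m j : ℤ} (hm : m ∈ Icc (-(l : ℤ)) l) (hj : |j| ≤ 1) :
    ((l : ℤ) + 1, m + j) ∈ Jset l := by
  rw [mem_Icc] at hm
  rw [abs_le] at hj
  rw [mem_Jset]
  omega

theorem eM_eq_single {a b : ℤ × ℤ} (ha : a ∈ Jset l) (hb : b ∈ Jset l) :
    eM l a b = Matrix.single ⟨a, ha⟩ ⟨b, hb⟩ 1 := by
  ext x y
  simp [eM, Matrix.single_apply, Subtype.ext_iff, eq_comm]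

theorem lie_Em_Fm_self {a b : ℤ × ℤ} (ha : a ∈ Jset l) (hb : b ∈ Jset l) (hab : a ≠ b) :
    ⁅Em l a b, Fm l a b⁆ = (2 : ℝ) • Dm l a b := by
  simp only [Em, Fm, Dm, eM_eq_single, ha, hb, smul_single, smul_eq_mul, mul_one, one_mul,
    Ring.lie_def, mul_add, mul_sub, add_mul, sub_mul, ne_eq, Subtype.mk.injEq, hab, hab.symm,
    not_false_eq_true, single_mul_single_of_ne, single_mul_single_same, zero_sub, sub_zero,
    zero_add, add_zero]
  module

theorem lie_Em_Fm_of_ne {a b c d : ℤ × ℤ} (ha : a ∈ Jset l) (hb : b ∈ Jset l)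
    (hc : c ∈ Jset l) (hd : d ∈ Jset l) (hac : a ≠ c) (had : a ≠ d) (hbc : b ≠ c)
    (hbd : b ≠ d) : ⁅Em l a b, Fm l c d⁆ = 0 := by
  simp [Em, Fm, eM_eq_single, ha, hb, hc, hd, Ring.lie_def, sub_mul, mul_sub, add_mul, mul_add,
    hac, had, hbc, hbd, hac.symm, had.symm, hbc.symm, hbd.symm]

def diagI (l : ℕ) : (ℤ × ℤ → ℝ) →ₗ[ℝ] Mat l where
  toFun g := diagonal fun x => Complex.I * g x
  map_add' g h := by ext x y; by_cases hxy : x = y <;> simp [hxy, mul_add]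
  map_smul' r g := by ext x y; by_cases hxy : x = y <;> simp [hxy, mul_left_comm]

theorem diagI_apply (g : ℤ × ℤ → ℝ) :
    diagI l g = diagonal fun x : Jset l => Complex.I * g x := rfl

theorem Dm_eq_diagI (a b : ℤ × ℤ) : Dm l a b = diagI l (Pi.single a 1 - Pi.single b 1) := by
  ext x y
  simp only [Dm, eM, diagI_apply, diagonal_apply, Matrix.sub_apply, Matrix.smul_apply,
    Subtype.ext_iff]
  split_ifs <;> simp_all

theorem Am_eq_diagI :
    Am l = diagI l fun x => if x.1 = l then (2 * l + 3) / 2 else -((2 * l + 1) / 2) := by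
  ext x y
  by_cases hxy : x = y
  · subst hxy
    obtain ⟨⟨i, m⟩, hx⟩ := x
    rw [mem_Jset] at hx
    rcases hx with ⟨rfl | rfl, hx⟩ <;> simp_all [Am, eM, diagI_apply, Matrix.sum_apply, mul_div_assoc]
  · have h0 (c : ℤ × ℤ) : eM l c c x y = 0 :=
      if_neg fun h => hxy (Subtype.ext (h.1.trans h.2.symm))
    simp [Am, Matrix.sum_apply, h0, diagI_apply, hxy]

theorem diagI_lie_eM (g : ℤ × ℤ → ℝ) (a b : ℤ × ℤ) :
    ⁅diagI l g, eM l a b⁆ = (Complex.I * (g a - g b)) • eM l a b := by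
  ext x y
  simp only [diagI_apply, Ring.lie_def, Matrix.sub_apply, diagonal_mul, mul_diagonal,
    Matrix.smul_apply, eM]
  split_ifs with h
  · rw [h.1, h.2, smul_eq_mul]
    ring
  · simp

theorem diagI_lie_Em (g : ℤ × ℤ → ℝ) (a b : ℤ × ℤ) :
    ⁅diagI l g, Em l a b⁆ = (g a - g b) • Fm l a b := by
  simp only [Em, Fm, lie_sub, diagI_lie_eM, RCLike.real_smul_eq_coe_smul (K := ℂ),
    RCLike.ofReal_eq_complex_ofReal]
  push_cast
  module

theorem diagI_lie_Fm (g : ℤ × ℤ → ℝ) (a b : ℤ × ℤ) :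
    ⁅diagI l g, Fm l a b⁆ = -(g a - g b) • Em l a b := by
  simp only [Em, Fm, lie_add, lie_smul, diagI_lie_eM, RCLike.real_smul_eq_coe_smul (K := ℂ),
    RCLike.ofReal_eq_complex_ofReal, smul_smul]
  push_cast
  match_scalars <;> ring_nf <;> simp [Complex.I_sq]

theorem diagI_lie_diagI_lie_Em (g : ℤ × ℤ → ℝ) (a b : ℤ × ℤ) :
    ⁅diagI l g, ⁅diagI l g, Em l a b⁆⁆ = -(g a - g b) ^ 2 • Em l a b := by
  rw [diagI_lie_Em, lie_smul, diagI_lie_Fm, smul_smul]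
  ring_nf

theorem lie_Am_Em (m n : ℤ) :
    ⁅Am l, Em l ((l : ℤ), m) ((l : ℤ) + 1, n)⁆ =
      (2 * l + 2 : ℝ) • Fm l ((l : ℤ), m) ((l : ℤ) + 1, n) := by
  rw [Am_eq_diagI, diagI_lie_Em, if_pos rfl, if_neg (by omega)]
  ring_nf

theorem lie_Am_Fm (m n : ℤ) :
    ⁅Am l, Fm l ((l : ℤ), m) ((l : ℤ) + 1, n)⁆ =
      -(2 * l + 2 : ℝ) • Em l ((l : ℤ), m) ((l : ℤ) + 1, n) := by
  rw [Am_eq_diagI, diagI_lie_Fm, if_pos rfl, if_neg (by omega)]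
  ring_nf

noncomputable def bandE (l : ℕ) (j : ℤ) (c : ℤ → ℝ) : Mat l :=
  ∑ m ∈ Icc (-(l : ℤ)) l, c m • Em l ((l : ℤ), m) ((l : ℤ) + 1, m + j)

noncomputable def bandF (l : ℕ) (j : ℤ) (c : ℤ → ℝ) : Mat l :=
  ∑ m ∈ Icc (-(l : ℤ)) l, c m • Fm l ((l : ℤ), m) ((l : ℤ) + 1, m + j)

noncomputable def bandWeight (l : ℕ) (j : ℤ) (c : ℤ → ℝ) : ℤ × ℤ → ℝ :=
  ∑ m ∈ Icc (-(l : ℤ)) l, c m • (Pi.single ((l : ℤ), m) 1 - Pi.single ((l : ℤ) + 1, m + j) 1)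

theorem bandWeight_lower {j k : ℤ} (c : ℤ → ℝ) (hk : k ∈ Icc (-(l : ℤ)) l) :
    bandWeight l j c ((l : ℤ), k) = c k := by
  simp [bandWeight, Finset.sum_apply, Pi.single_apply, hk]

theorem bandWeight_upper (j n : ℤ) (c : ℤ → ℝ) :
    bandWeight l j c ((l : ℤ) + 1, n) = -if n - j ∈ Icc (-(l : ℤ)) l then c (n - j) else 0 := by
  have hn (m : ℤ) : n = m + j ↔ n - j = m := by omega
  simp [bandWeight, Finset.sum_apply, Pi.single_apply, hn]

theorem lie_Am_bandE (j : ℤ) (c : ℤ → ℝ) :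
    ⁅Am l, bandE l j c⁆ = (2 * l + 2 : ℝ) • bandF l j c := by
  simp only [bandE, bandF, lie_sum, lie_smul, lie_Am_Em, smul_sum, smul_comm (c _)]

theorem lie_Am_bandF (j : ℤ) (c : ℤ → ℝ) :
    ⁅Am l, bandF l j c⁆ = -(2 * l + 2 : ℝ) • bandE l j c := by
  simp only [bandE, bandF, lie_sum, lie_smul, lie_Am_Fm, smul_sum, smul_comm (c _)]

theorem lie_bandE_bandF {j : ℤ} (hj : |j| ≤ 1) (c : ℤ → ℝ) :
    ⁅bandE l j c, bandF l j c⁆ = diagI l (bandWeight l j fun m => 2 * c m ^ 2) := by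
  have hdiag : ∀ m ∈ Icc (-(l : ℤ)) l,
      ⁅c m • Em l ((l : ℤ), m) ((l : ℤ) + 1, m + j), bandF l j c⁆ =
        (2 * c m ^ 2) • Dm l ((l : ℤ), m) ((l : ℤ) + 1, m + j) := by
    intro m hm
    rw [bandF, lie_sum, sum_eq_single m]
    · rw [smul_lie, lie_smul, lie_Em_Fm_self (lower_mem_Jset hm) (upper_mem_Jset hm hj)
        (by simp), smul_smul, smul_smul]
      ring_nf
    · intro n hn hnm
      rw [smul_lie, lie_smul, lie_Em_Fm_of_ne (lower_mem_Jset hm) (upper_mem_Jset hm hj)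
        (lower_mem_Jset hn) (upper_mem_Jset hn hj) (by simp [Ne.symm hnm]) (by simp) (by simp)
        (by simp [Ne.symm hnm]), smul_zero, smul_zero]
    · exact fun h => absurd hm h
  rw [bandE, sum_lie, sum_congr rfl hdiag, bandWeight, map_sum]
  simp only [map_smul, Dm_eq_diagI]

theorem Em_mem_of_bandE_mem {K : LieSubalgebra ℝ (Mat l)} {g : ℤ × ℤ → ℝ}
    (hD : diagI l g ∈ K) {j : ℤ} {c : ℤ → ℝ} (hB : bandE l j c ∈ K)
    (hc : ∀ k ∈ Icc (-(l : ℤ)) l, c k ≠ 0)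
    (hg : Set.InjOn (fun k => (g ((l : ℤ), k) - g ((l : ℤ) + 1, k + j)) ^ 2) (Icc (-(l : ℤ)) l))
    {k : ℤ} (hk : k ∈ Icc (-(l : ℤ)) l) : Em l ((l : ℤ), k) ((l : ℤ) + 1, k + j) ∈ K := by
  refine (K.smul_mem_iff (hc k hk)).mp ?_
  refine K.mem_of_sum_mem_of_lie_lie_eq_smul hD (neg_injective.comp_injOn hg) (fun m _ => ?_) hB
    k hk
  rw [lie_smul, lie_smul, diagI_lie_diagI_lie_Em, smul_comm]
  rfl

theorem Em_mem_of_bandE_mem_of_bandF_mem {K : LieSubalgebra ℝ (Mat l)} {j : ℤ} (hj : |j| ≤ 1)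
    {c : ℤ → ℝ} (hE : bandE l j c ∈ K) (hF : bandF l j c ∈ K)
    (hc : ∀ k ∈ Icc (-(l : ℤ)) l, c k ≠ 0)
    (hinj : Set.InjOn (fun k => c k ^ 2) (Icc (-(l : ℤ)) l))
    {k : ℤ} (hk : k ∈ Icc (-(l : ℤ)) l) : Em l ((l : ℤ), k) ((l : ℤ) + 1, k + j) ∈ K := by
  have hD := K.lie_mem hE hF
  rw [lie_bandE_bandF hj] at hD
  refine Em_mem_of_bandE_mem hD hE hc (fun m hm m' hm' h => hinj hm hm' ?_) hk
  simp only [bandWeight_lower _ hm, bandWeight_lower _ hm', bandWeight_upper,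
    add_sub_cancel_right, if_pos (Finset.mem_coe.mp hm), if_pos (Finset.mem_coe.mp hm')] at h
  nlinarith [sq_nonneg (c m), sq_nonneg (c m')]

theorem qc_sq {m : ℤ} (hm : m ≤ l + 1) :
    qc l m ^ 2 = (l - m + 2) * (l - m + 1) / (4 * (2 * l + 1) * (2 * l + 3)) := by
  have : (m : ℝ) ≤ l + 1 := by exact_mod_cast hm
  rw [qc, Real.sq_sqrt (div_nonneg (mul_nonneg (by linarith) (by linarith)) (by positivity))]

theorem qc_pos {m : ℤ} (hm : m ≤ l) : 0 < qc l m := by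
  have : (m : ℝ) ≤ l := by exact_mod_cast hm
  exact Real.sqrt_pos.mpr (div_pos (mul_pos (by linarith) (by linarith)) (by positivity))

theorem qc_self_add_one : qc l (l + 1) = 0 := by
  simp [qc]

theorem qc_sq_injOn : Set.InjOn (fun m => qc l m ^ 2) (Set.Iic ((l : ℤ) + 1)) := by
  intro m hm m' hm' h
  rw [Set.mem_Iic] at hm hm'
  dsimp only at h
  rw [qc_sq hm, qc_sq hm', div_left_inj' (by positivity)] at h
  have hm : (m : ℝ) ≤ l + 1 := by exact_mod_cast hm
  have hm' : (m' : ℝ) ≤ l + 1 := by exact_mod_cast hm'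
  exact_mod_cast (show (m : ℝ) = m' by nlinarith)

theorem qc_sq_add_qc_add_one_sq {m : ℤ} (hm : m ≤ l) :
    qc l m ^ 2 + qc l (m + 1) ^ 2 = (l - m + 1) ^ 2 / (2 * (2 * l + 1) * (2 * l + 3)) := by
  rw [qc_sq (by omega), qc_sq (by omega)]
  field_simp
  push_cast
  ring

theorem pc_ne_zero {m : ℤ} (hm : m ∈ Icc (-(l : ℤ)) l) : pc l m ≠ 0 := by
  rw [mem_Icc] at hm
  have : (m : ℝ) ^ 2 < (l + 1) ^ 2 := by
    have : m ^ 2 < ((l : ℤ) + 1) ^ 2 := by nlinarith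
    exact_mod_cast this
  rw [pc, neg_ne_zero, Real.sqrt_ne_zero']
  exact div_pos (by linarith) (by positivity)

theorem bandWeight_one_lower_sub_upper {n : ℤ} (hn : n ∈ Icc (-(l : ℤ)) l) :
    bandWeight l 1 (fun m => 2 * qc l (-m) ^ 2) ((l : ℤ), n) -
      bandWeight l 1 (fun m => 2 * qc l (-m) ^ 2) ((l : ℤ) + 1, n) =
      (l + n + 1) ^ 2 / ((2 * l + 1) * (2 * l + 3)) := by
  -- At `n = -ℓ` the column `(ℓ+1, n)` lies outside the band; there `q_{ℓ,ℓ+1} = 0`.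
  have hupper : (if n - 1 ∈ Icc (-(l : ℤ)) l then 2 * qc l (-(n - 1)) ^ 2 else 0) =
      2 * qc l (-n + 1) ^ 2 := by
    split_ifs with h1
    · rw [neg_sub', sub_neg_eq_add]
    · obtain rfl : n = -l := by rw [mem_Icc] at hn h1; omega
      rw [neg_neg, qc_self_add_one, zero_pow two_ne_zero, mul_zero]
  rw [bandWeight_lower _ hn, bandWeight_upper, hupper, sub_neg_eq_add, ← mul_add,
    qc_sq_add_qc_add_one_sq (by rw [mem_Icc] at hn; omega)]
  field_simp
  push_cast
  ring

theorem B1_eq_bandF : B1 l = bandF l 1 (fun m => qc l (-m)) - bandF l (-1) (qc l) := by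
  rw [B1, bandF, bandF, ← sum_sub_distrib]
  refine sum_congr rfl fun m _ => ?_
  rw [neg_smul, sub_eq_add_neg m 1]
  abel

theorem B2_eq_bandE : B2 l = bandE l (-1) (qc l) + bandE l 1 (fun m => qc l (-m)) := by
  simp only [B2, bandE, ← sum_add_distrib, sub_eq_add_neg]

theorem B3_eq_bandF : B3 l = bandF l 0 (pc l) := by
  simp only [B3, bandF, add_zero]

section

variable {K : LieSubalgebra ℝ (Mat l)}

theorem bandF_mem_of_bandE_mem (hA : Am l ∈ K) {j : ℤ} {c : ℤ → ℝ} (h : bandE l j c ∈ K) :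
    bandF l j c ∈ K :=
  (K.smul_mem_iff (by positivity : (2 * l + 2 : ℝ) ≠ 0)).mp (lie_Am_bandE j c ▸ K.lie_mem hA h)

theorem bandE_mem_of_bandF_mem (hA : Am l ∈ K) {j : ℤ} {c : ℤ → ℝ} (h : bandF l j c ∈ K) :
    bandE l j c ∈ K :=
  (K.smul_mem_iff (neg_ne_zero.mpr (by positivity))).mp (lie_Am_bandF j c ▸ K.lie_mem hA h)

theorem bandE_one_sub_bandE_neg_one_mem (hA : Am l ∈ K) (hB1 : B1 l ∈ K) :
    bandE l 1 (fun m => qc l (-m)) - bandE l (-1) (qc l) ∈ K := by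
  have h := K.lie_mem hA hB1
  rw [B1_eq_bandF, lie_sub, lie_Am_bandF, lie_Am_bandF, ← smul_sub] at h
  exact (K.smul_mem_iff (neg_ne_zero.mpr (by positivity))).mp h

theorem bandE_one_mem (hA : Am l ∈ K) (hB1 : B1 l ∈ K) (hB2 : B2 l ∈ K) :
    bandE l 1 (fun m => qc l (-m)) ∈ K := by
  refine (K.smul_mem_iff (two_ne_zero (α := ℝ))).mp ?_
  convert K.add_mem (B2_eq_bandE (l := l) ▸ hB2) (bandE_one_sub_bandE_neg_one_mem hA hB1)
    using 1
  module

theorem bandE_neg_one_mem (hA : Am l ∈ K) (hB1 : B1 l ∈ K) (hB2 : B2 l ∈ K) :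
    bandE l (-1) (qc l) ∈ K := by
  refine (K.smul_mem_iff (two_ne_zero (α := ℝ))).mp ?_
  convert K.sub_mem (B2_eq_bandE (l := l) ▸ hB2) (bandE_one_sub_bandE_neg_one_mem hA hB1)
    using 1
  module

theorem Em_add_one_mem (hA : Am l ∈ K) (hB1 : B1 l ∈ K) (hB2 : B2 l ∈ K) {k : ℤ}
    (hk : k ∈ Icc (-(l : ℤ)) l) : Em l ((l : ℤ), k) ((l : ℤ) + 1, k + 1) ∈ K := by
  have hE := bandE_one_mem hA hB1 hB2
  refine Em_mem_of_bandE_mem_of_bandF_mem (by norm_num) hE (bandF_mem_of_bandE_mem hA hE)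
    (fun m hm => (qc_pos (by rw [mem_Icc] at hm; omega)).ne') (fun m hm m' hm' h => ?_) hk
  rw [coe_Icc, Set.mem_Icc] at hm hm'
  exact neg_inj.mp (qc_sq_injOn (by rw [Set.mem_Iic]; omega) (by rw [Set.mem_Iic]; omega) h)

theorem Em_add_neg_one_mem (hA : Am l ∈ K) (hB1 : B1 l ∈ K) (hB2 : B2 l ∈ K) {k : ℤ}
    (hk : k ∈ Icc (-(l : ℤ)) l) : Em l ((l : ℤ), k) ((l : ℤ) + 1, k + -1) ∈ K := by
  have hE := bandE_neg_one_mem hA hB1 hB2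
  refine Em_mem_of_bandE_mem_of_bandF_mem (by norm_num) hE (bandF_mem_of_bandE_mem hA hE)
    (fun m hm => (qc_pos (by rw [mem_Icc] at hm; omega)).ne') (fun m hm m' hm' h => ?_) hk
  rw [coe_Icc, Set.mem_Icc] at hm hm'
  exact qc_sq_injOn (by rw [Set.mem_Iic]; omega) (by rw [Set.mem_Iic]; omega) h

theorem Em_add_zero_mem (hA : Am l ∈ K) (hB1 : B1 l ∈ K) (hB2 : B2 l ∈ K) (hB3 : B3 l ∈ K)
    {k : ℤ} (hk : k ∈ Icc (-(l : ℤ)) l) : Em l ((l : ℤ), k) ((l : ℤ) + 1, k + 0) ∈ K := by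
  have hE := bandE_one_mem hA hB1 hB2
  have hD := K.lie_mem hE (bandF_mem_of_bandE_mem hA hE)
  rw [lie_bandE_bandF (by norm_num)] at hD
  refine Em_mem_of_bandE_mem hD (bandE_mem_of_bandF_mem hA (B3_eq_bandF (l := l) ▸ hB3))
    (fun m hm => pc_ne_zero hm) (fun m hm m' hm' h => ?_) hk
  dsimp only at h
  rw [add_zero, add_zero, bandWeight_one_lower_sub_upper hm,
    bandWeight_one_lower_sub_upper hm'] at h
  rw [coe_Icc, Set.mem_Icc] at hm hm'
  have hm₀ : (0 : ℝ) ≤ l + m + 1 := by exact_mod_cast (show (0 : ℤ) ≤ l + m + 1 by omega)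
  have hm₀' : (0 : ℝ) ≤ l + m' + 1 := by exact_mod_cast (show (0 : ℤ) ≤ l + m' + 1 by omega)
  rw [sq_eq_sq₀ (by positivity) (by positivity), div_left_inj' (by positivity),
    sq_eq_sq₀ hm₀ hm₀'] at h
  exact_mod_cast (show (m : ℝ) = m' by linarith)

end

/-- The real Lie algebra `L` generated by `A, B₁, B₂, B₃` contains the elementary
matrices `E_{(ℓ,k),(ℓ+1,k+j)}` for every `k = -ℓ, …, ℓ` and every `j ∈ {-1, 0, 1}`. -/
theorem elementary_matrices_mem (l : ℕ) (k j : ℤ)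
    (hk : -(l : ℤ) ≤ k ∧ k ≤ (l : ℤ)) (hj : j = -1 ∨ j = 0 ∨ j = 1) :
    Em l ((l : ℤ), k) ((l : ℤ) + 1, k + j) ∈
      LieSubalgebra.lieSpan ℝ (Mat l) {Am l, B1 l, B2 l, B3 l} := by
  have gen {x : Mat l} (hx : x ∈ ({Am l, B1 l, B2 l, B3 l} : Set (Mat l))) :
      x ∈ LieSubalgebra.lieSpan ℝ (Mat l) {Am l, B1 l, B2 l, B3 l} :=
    LieSubalgebra.subset_lieSpan hx
  have hk : k ∈ Icc (-(l : ℤ)) l := mem_Icc.mpr hk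
  rcases hj with rfl | rfl | rfl
  · exact Em_add_neg_one_mem (gen (by simp)) (gen (by simp)) (gen (by simp)) hk
  · exact Em_add_zero_mem (gen (by simp)) (gen (by simp)) (gen (by simp)) (gen (by simp)) hk
  · exact Em_add_one_mem (gen (by simp)) (gen (by simp)) (gen (by simp)) hk
end

section
/- For every integer j ≥ 0, the iterated commutator ad_{B₃}^{2j+1}(A) equals (−1)^j (ℓ+1) 2^{2j+1} Σ_{m=−ℓ}^{ℓ} p_{ℓ,m}^{2j+1} E_{(ℓ,m),(ℓ+1,m)}, where ad_X(Y) = [X,Y] = XY − YX and ad_X^{k+1}(Y) = [X, ad_X^k(Y)]. -/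
open Matrix

/-!
Write `E_m`, `D_m`, `F_m` for `E`, `D`, `F` at the pair `(ℓ,m), (ℓ+1,m)`, so that
`B₃ = ∑ p_{ℓ,m} F_m`. Summands of `B₃` with `m' ≠ m` have support disjoint from that of
`E_m, D_m`, so the plane spanned by `E_m, D_m` is `ad_{B₃}`-invariant and `ad_{B₃}` acts on it
as the `su(2)` relations `[F_m, E_m] = -2 D_m`, `[F_m, D_m] = 2 E_m` scaled by `p_{ℓ,m}`;
hence `ad_{B₃}²` multiplies `E_m` by `-(2 p_{ℓ,m})²`. Since `A` is diagonal,
`[F_{a,b}, A] = i (α_b - α_a) E_{a,b}`, which gives `ad_{B₃}(A) = 2(ℓ+1) ∑ p_{ℓ,m} E_m`.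
-/

section Commutators

open Complex

-- Mathlib does not register the commutator Lie ring structure of a ring as a global instance.
attribute [local instance] LieRing.ofAssociativeRing

section MatrixUnits

variable {l : ℕ}

lemma eM_mul_eM (a b c d : ℤ × ℤ) :
    eM l a b * eM l c d = if b = c ∧ b ∈ Jset l then eM l a d else 0 := by
  ext x y
  by_cases h : b = c ∧ b ∈ Jset l
  · obtain ⟨rfl, hb⟩ := h
    rw [mul_apply, Finset.sum_eq_single ⟨b, hb⟩] <;> simp +contextual [eM, hb, ← ite_and, and_comm]
  · rw [if_neg h, mul_apply]
    refine Finset.sum_eq_zero fun z _ => ?_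
    have : ¬((z : ℤ × ℤ) = b ∧ (z : ℤ × ℤ) = c) := fun ⟨hb, hc⟩ => h ⟨hb ▸ hc, hb ▸ z.2⟩
    simp only [eM]
    split_ifs <;> simp_all

lemma eM_mul_eM_of_ne {b c : ℤ × ℤ} (a d : ℤ × ℤ) (h : b ≠ c) : eM l a b * eM l c d = 0 := by
  simp [eM_mul_eM, h]

lemma eM_mul_eM_self {b : ℤ × ℤ} (a d : ℤ × ℤ) (hb : b ∈ Jset l) :
    eM l a b * eM l b d = eM l a d := by
  simp [eM_mul_eM, hb]

variable {a b : ℤ × ℤ}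

lemma lie_Fm_Em_self (ha : a ∈ Jset l) (hb : b ∈ Jset l) (hab : a ≠ b) :
    ⁅Fm l a b, Em l a b⁆ = (-2 : ℝ) • Dm l a b := by
  simp only [Ring.lie_def, Fm, Em, Dm, add_mul, mul_add, sub_mul, mul_sub, smul_mul_assoc,
    mul_smul_comm, eM_mul_eM_self _ _ ha, eM_mul_eM_self _ _ hb, eM_mul_eM_of_ne _ _ hab,
    eM_mul_eM_of_ne _ _ hab.symm]
  module

lemma lie_Fm_Dm_self (ha : a ∈ Jset l) (hb : b ∈ Jset l) (hab : a ≠ b) :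
    ⁅Fm l a b, Dm l a b⁆ = (2 : ℝ) • Em l a b := by
  simp only [Ring.lie_def, Fm, Em, Dm, add_mul, mul_add, sub_mul, mul_sub, smul_mul_assoc,
    mul_smul_comm, eM_mul_eM_self _ _ ha, eM_mul_eM_self _ _ hb, eM_mul_eM_of_ne _ _ hab,
    eM_mul_eM_of_ne _ _ hab.symm]
  simp only [smul_zero, add_zero, zero_add, sub_zero, zero_sub, smul_sub, smul_neg,
    smul_smul, I_mul_I]
  module

variable {c d : ℤ × ℤ}

lemma lie_Fm_Em_of_disjoint (hac : a ≠ c) (had : a ≠ d) (hbc : b ≠ c) (hbd : b ≠ d) :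
    ⁅Fm l a b, Em l c d⁆ = 0 := by
  simp [Ring.lie_def, Fm, Em, add_mul, mul_add, sub_mul, mul_sub, eM_mul_eM_of_ne, *, Ne.symm]

lemma lie_Fm_Dm_of_disjoint (hac : a ≠ c) (had : a ≠ d) (hbc : b ≠ c) (hbd : b ≠ d) :
    ⁅Fm l a b, Dm l c d⁆ = 0 := by
  simp [Ring.lie_def, Fm, Dm, add_mul, mul_add, sub_mul, mul_sub, eM_mul_eM_of_ne, *, Ne.symm]

lemma lie_Fm_diagonal (w : ℤ × ℤ → ℂ) :
    ⁅Fm l a b, (diagonal fun x : Jset l => w x : Mat l)⁆ = (I * (w b - w a)) • Em l a b := by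
  ext x y
  simp only [Ring.lie_def, Matrix.sub_apply, mul_diagonal, diagonal_mul, Fm, Em, eM,
    Matrix.add_apply, Matrix.smul_apply, smul_eq_mul]
  by_cases hab : a = b
  · subst hab
    by_cases hx : (x : ℤ × ℤ) = a <;> by_cases hy : (y : ℤ × ℤ) = a <;> simp [hx, hy, mul_comm]
  by_cases hxa : (x : ℤ × ℤ) = a <;> by_cases hxb : (x : ℤ × ℤ) = b <;>
    by_cases hya : (y : ℤ × ℤ) = a <;> by_cases hyb : (y : ℤ × ℤ) = b <;>
    simp [hxa, hxb, hya, hyb, hab, Ne.symm hab] <;> ring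

end MatrixUnits

section AdB3

variable (l : ℕ)

lemma mem_Jset_lower {m : ℤ} (hm : m ∈ Finset.Icc (-(l : ℤ)) l) : ((l : ℤ), m) ∈ Jset l := by
  simp only [Finset.mem_Icc] at hm
  simp [Jset]
  omega

lemma mem_Jset_upper {m : ℤ} (hm : m ∈ Finset.Icc (-((l : ℤ) + 1)) (l + 1)) :
    ((l : ℤ) + 1, m) ∈ Jset l := by
  simp only [Finset.mem_Icc] at hm
  simp [Jset]
  omega

variable {l}

lemma lie_B3_eq_smul_lie {m : ℤ} (hm : m ∈ Finset.Icc (-(l : ℤ)) l) {X : Mat l}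
    (hX : ∀ m' ≠ m, ⁅Fm l ((l : ℤ), m') ((l : ℤ) + 1, m'), X⁆ = 0) :
    ⁅B3 l, X⁆ = pc l m • ⁅Fm l ((l : ℤ), m) ((l : ℤ) + 1, m), X⁆ := by
  rw [B3, sum_lie, Finset.sum_eq_single_of_mem m hm, smul_lie]
  intro m' _ hm'
  rw [smul_lie, hX m' hm', smul_zero]

lemma lie_B3_Em {m : ℤ} (hm : m ∈ Finset.Icc (-(l : ℤ)) l) :
    ⁅B3 l, Em l ((l : ℤ), m) ((l : ℤ) + 1, m)⁆ =
      (-2 * pc l m) • Dm l ((l : ℤ), m) ((l : ℤ) + 1, m) := by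
  have hm' : m ∈ Finset.Icc (-((l : ℤ) + 1)) (l + 1) := by
    simp only [Finset.mem_Icc] at hm ⊢; omega
  rw [lie_B3_eq_smul_lie hm fun m' hm' => lie_Fm_Em_of_disjoint (by simp [hm']) (by simp)
      (by simp) (by simp [hm']),
    lie_Fm_Em_self (mem_Jset_lower l hm) (mem_Jset_upper l hm') (by simp), smul_smul, mul_comm]

lemma lie_B3_Dm {m : ℤ} (hm : m ∈ Finset.Icc (-(l : ℤ)) l) :
    ⁅B3 l, Dm l ((l : ℤ), m) ((l : ℤ) + 1, m)⁆ =
      (2 * pc l m) • Em l ((l : ℤ), m) ((l : ℤ) + 1, m) := by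
  have hm' : m ∈ Finset.Icc (-((l : ℤ) + 1)) (l + 1) := by
    simp only [Finset.mem_Icc] at hm ⊢; omega
  rw [lie_B3_eq_smul_lie hm fun m' hm' => lie_Fm_Dm_of_disjoint (by simp [hm']) (by simp)
      (by simp) (by simp [hm']),
    lie_Fm_Dm_self (mem_Jset_lower l hm) (mem_Jset_upper l hm') (by simp), smul_smul, mul_comm]

lemma lie_B3_lie_B3_sum_Em (f : ℤ → ℝ) :
    ⁅B3 l, ⁅B3 l, ∑ m ∈ Finset.Icc (-(l : ℤ)) l, f m • Em l ((l : ℤ), m) ((l : ℤ) + 1, m)⁆⁆ =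
      ∑ m ∈ Finset.Icc (-(l : ℤ)) l,
        (-(2 * pc l m) ^ 2 * f m) • Em l ((l : ℤ), m) ((l : ℤ) + 1, m) := by
  simp only [lie_sum, lie_smul]
  refine Finset.sum_congr rfl fun m hm => ?_
  rw [lie_B3_Em hm, lie_smul, lie_B3_Dm hm, smul_smul, smul_smul]
  congr 1
  ring

lemma iterate_lie_B3_two_mul (f : ℤ → ℝ) (j : ℕ) :
    (fun Y : Mat l => ⁅B3 l, Y⁆)^[2 * j]
        (∑ m ∈ Finset.Icc (-(l : ℤ)) l, f m • Em l ((l : ℤ), m) ((l : ℤ) + 1, m)) =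
      ∑ m ∈ Finset.Icc (-(l : ℤ)) l,
        ((-1) ^ j * (2 * pc l m) ^ (2 * j) * f m) • Em l ((l : ℤ), m) ((l : ℤ) + 1, m) := by
  induction j with
  | zero => simp
  | succ j ih =>
    rw [Nat.mul_succ, Function.iterate_succ_apply', Function.iterate_succ_apply', ih,
      lie_B3_lie_B3_sum_Em]
    refine Finset.sum_congr rfl fun m _ => ?_
    congr 1
    ring

/-- The diagonal entries `α_{(j,k)}` of `A`. -/
noncomputable def alpha (l : ℕ) (x : ℤ × ℤ) : ℂ :=
  if x.1 = l then I * (2 * l + 3) / 2 else -(I * (2 * l + 1) / 2)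

lemma Am_eq_diagonal : Am l = diagonal fun x : Jset l => alpha l x := by
  ext ⟨⟨j, k⟩, hx⟩ ⟨y, hy⟩
  have hjk : (j = l ∨ j = l + 1) ∧ -j ≤ k ∧ k ≤ j := by simp [Jset] at hx; tauto
  simp only [Am, Matrix.add_apply, Matrix.sum_apply, Matrix.smul_apply, eM, diagonal_apply,
    Subtype.mk.injEq, smul_eq_mul, alpha]
  obtain ⟨rfl | rfl, hk⟩ := hjk
  · rw [Finset.sum_eq_single_of_mem k (by simp; omega)] <;> simp +contextual [eq_comm]
  · rw [Finset.sum_eq_zero (by simp), Finset.sum_eq_single_of_mem k (by simp; omega)] <;>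
      simp +contextual [eq_comm]

lemma I_mul_alpha_sub_alpha (m : ℤ) :
    I * (alpha l ((l : ℤ) + 1, m) - alpha l ((l : ℤ), m)) = ((2 * (l + 1) : ℝ) : ℂ) := by
  simp only [alpha, add_eq_left, one_ne_zero, if_false, if_true]
  push_cast
  linear_combination (-(2 * (l : ℂ) + 2)) * I_sq

lemma lie_B3_Am :
    ⁅B3 l, Am l⁆ = ∑ m ∈ Finset.Icc (-(l : ℤ)) l,
      (2 * (l + 1) * pc l m) • Em l ((l : ℤ), m) ((l : ℤ) + 1, m) := by
  rw [B3, sum_lie, Am_eq_diagonal]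
  refine Finset.sum_congr rfl fun m _ => ?_
  rw [smul_lie, lie_Fm_diagonal, I_mul_alpha_sub_alpha, Complex.coe_smul, smul_smul, mul_comm]

end AdB3

end Commutators

/-- For every `j ≥ 0`,
`ad_{B₃}^{2j+1}(A) = (-1)^j (ℓ+1) 2^{2j+1} ∑_{m=-ℓ}^{ℓ} p_{ℓ,m}^{2j+1} E_{(ℓ,m),(ℓ+1,m)}`. -/
theorem ad_B3_odd_power (l : ℕ) (j : ℕ) :
    (fun Y : Mat l => ⁅B3 l, Y⁆)^[2 * j + 1] (Am l) =
      ((-1 : ℝ) ^ j * ((l : ℝ) + 1) * 2 ^ (2 * j + 1)) •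
        ∑ m ∈ Finset.Icc (-(l : ℤ)) (l : ℤ),
          (pc l m ^ (2 * j + 1)) • Em l ((l : ℤ), m) ((l : ℤ) + 1, m) := by
  rw [Function.iterate_succ_apply, lie_B3_Am, iterate_lie_B3_two_mul, Finset.smul_sum]
  refine Finset.sum_congr rfl fun m _ => ?_
  rw [smul_smul]
  congr 1
  ring
end
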